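/- Let X be a real Hilbert space, M ⊆ X a nonempty closed convex set, J : X → ℝ Fréchet differentiable, x† ∈ M, γ > 0, η ≥ 0 and τ > 1/γ. Assume ⟨∇J(x) − ∇J(x†), x − x†⟩ ≥ γ‖∇J(x)‖² for all x ∈ M and ⟨∇J(x†), x − x†⟩ ≥ −η for all x ∈ M. Let (x_k)_{0 ≤ k ≤ N} ⊆ M be generated by x_{k+1} = P_M(x_k − μ_k ∇J(x_k)) with stepsizes 0 < μ̲ ≤ μ_k ≤ μ̄ < 2(γ − 1/τ), and assume ‖∇J(x_k)‖² ≥ τη for all k ≤ N − 1. Then ∑_{k=0}^{N−1} ‖∇J(x_k)‖² ≤ ‖x_0 − x†‖² / (μ̲(2γ − μ̄ − 2/τ)). -/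

import Mathlib

/-!
Since `x†` lies in `M`, the variational inequality characterising `x_{k+1}` makes the projection
step nonexpansive towards `x†`, so `‖x_{k+1} - x†‖² ≤ ‖x_k - μ_k ∇J(x_k) - x†‖²`. Expanding the
square and bounding `⟪∇J(x_k), x_k - x†⟫ ≥ γ‖∇J(x_k)‖² - η ≥ (γ - 1/τ)‖∇J(x_k)‖²` gives the
Fejér-type descent `μ̲(2γ - μ̄ - 2/τ)‖∇J(x_k)‖² ≤ ‖x_k - x†‖² - ‖x_{k+1} - x†‖²`, which telescopes.
-/

open RealInnerProductSpace Finset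

section InnerProductSpace

variable {X : Type*} [NormedAddCommGroup X] [InnerProductSpace ℝ X]

theorem norm_sub_sq_le_of_inner_sub_nonpos {y p z : X} (h : ⟪y - p, z - p⟫ ≤ 0) :
    ‖p - z‖ ^ 2 ≤ ‖y - z‖ ^ 2 := by
  have hsplit : y - z = (y - p) - (z - p) := by abel
  rw [hsplit, norm_sub_sq_real (y - p), norm_sub_rev p z]
  nlinarith [sq_nonneg ‖y - p‖]

theorem norm_sub_smul_sub_sq (a b g : X) (μ : ℝ) :
    ‖a - μ • g - b‖ ^ 2 = ‖a - b‖ ^ 2 - 2 * μ * ⟪g, a - b⟫ + μ ^ 2 * ‖g‖ ^ 2 := by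
  rw [show a - μ • g - b = (a - b) - μ • g by abel, norm_sub_sq_real, inner_smul_right,
    norm_smul, mul_pow, Real.norm_eq_abs, sq_abs, real_inner_comm]
  ring

theorem norm_sub_sq_le_of_projected_gradient_step {a g p z : X} {μ : ℝ}
    (hproj : ⟪a - μ • g - p, z - p⟫ ≤ 0) :
    ‖p - z‖ ^ 2 ≤ ‖a - z‖ ^ 2 - (2 * μ * ⟪g, a - z⟫ - μ ^ 2 * ‖g‖ ^ 2) := by
  have hnonexp := norm_sub_sq_le_of_inner_sub_nonpos hproj
  rw [norm_sub_smul_sub_sq] at hnonexp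
  linarith

end InnerProductSpace

theorem mul_le_two_mul_sub_sq_mul {γ η τ μ μlo μhi G s : ℝ} (hτ : 0 < τ) (hG : 0 ≤ G)
    (hηG : τ * η ≤ G) (hs : γ * G - η ≤ s) (hμlo : 0 ≤ μlo) (hμ : μlo ≤ μ ∧ μ ≤ μhi)
    (hμhi : μhi ≤ 2 * (γ - 1 / τ)) :
    μlo * (2 * γ - μhi - 2 / τ) * G ≤ 2 * μ * s - μ ^ 2 * G := by
  obtain ⟨hμlo_le, hμ_le⟩ := hμ
  have hμ0 : 0 ≤ μ := hμlo.trans hμlo_le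
  have h2τ : 2 / τ = 2 * (1 / τ) := by ring
  have hη : η ≤ G / τ := by rw [le_div_iff₀ hτ]; linarith
  have hs' : (γ - 1 / τ) * G ≤ s := by
    have : G / τ = 1 / τ * G := by ring
    linarith
  have hcoeff : μlo * (2 * γ - μhi - 2 / τ) ≤ μ * (2 * (γ - 1 / τ) - μ) :=
    mul_le_mul hμlo_le (by linarith) (by linarith) hμ0
  calc μlo * (2 * γ - μhi - 2 / τ) * G
      ≤ μ * (2 * (γ - 1 / τ) - μ) * G := by gcongr
    _ = 2 * μ * ((γ - 1 / τ) * G) - μ ^ 2 * G := by ring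
    _ ≤ 2 * μ * s - μ ^ 2 * G := by gcongr

theorem sum_range_le_div_of_mul_le_sub_succ {a d : ℕ → ℝ} {c : ℝ} {N : ℕ} (hc : 0 < c)
    (hdN : 0 ≤ d N) (h : ∀ k < N, c * a k ≤ d k - d (k + 1)) :
    ∑ k ∈ range N, a k ≤ d 0 / c := by
  rw [le_div_iff₀ hc, sum_mul]
  calc ∑ k ∈ range N, a k * c
      ≤ ∑ k ∈ range N, (d k - d (k + 1)) :=
        sum_le_sum fun k hk => by rw [mul_comm]; exact h k (mem_range.mp hk)
    _ = d 0 - d N := sum_range_sub' d N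
    _ ≤ d 0 := by linarith

theorem projected_gradient_gradient_summability_general
    {X : Type*} [NormedAddCommGroup X] [InnerProductSpace ℝ X] [CompleteSpace X]
    (M : Set X)
    (J : X → ℝ)
    (xdag : X) (hxdag : xdag ∈ M)
    (γ η τ : ℝ) (hγ : 0 < γ) (hτ : 1 / γ < τ)
    (hconvex : ∀ x ∈ M,
      ⟪gradient J x - gradient J xdag, x - xdag⟫ ≥ γ * ‖gradient J x‖ ^ 2)
    (hstat : ∀ x ∈ M, ⟪gradient J xdag, x - xdag⟫ ≥ -η)
    (N : ℕ) (x : ℕ → X) (hxM : ∀ k ≤ N, x k ∈ M)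
    (μ : ℕ → ℝ) (μlo μhi : ℝ) (hμlo : 0 < μlo)
    (hμ : ∀ k < N, μlo ≤ μ k ∧ μ k ≤ μhi) (hμhi : μhi < 2 * (γ - 1 / τ))
    (hproj : ∀ k < N, ∀ z ∈ M,
      ⟪(x k - μ k • gradient J (x k)) - x (k + 1), z - x (k + 1)⟫ ≤ 0)
    (hdisc : ∀ k < N, ‖gradient J (x k)‖ ^ 2 ≥ τ * η) :
    ∑ k ∈ Finset.range N, ‖gradient J (x k)‖ ^ 2 ≤
      ‖x 0 - xdag‖ ^ 2 / (μlo * (2 * γ - μhi - 2 / τ)) := by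
  have hτ0 : 0 < τ := (one_div_pos.mpr hγ).trans hτ
  have hc : 0 < μlo * (2 * γ - μhi - 2 / τ) := by
    refine mul_pos hμlo ?_
    have : 2 / τ = 2 * (1 / τ) := by ring
    linarith
  refine sum_range_le_div_of_mul_le_sub_succ (d := fun k => ‖x k - xdag‖ ^ 2) hc (sq_nonneg _)
    fun k hk => ?_
  have hinner : γ * ‖gradient J (x k)‖ ^ 2 - η ≤ ⟪gradient J (x k), x k - xdag⟫ := by
    have hmono := hconvex (x k) (hxM k hk.le)
    rw [inner_sub_left] at hmono
    linarith [hstat (x k) (hxM k hk.le)]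
  have hdescent := norm_sub_sq_le_of_projected_gradient_step (hproj k hk xdag hxdag)
  have hcoeff := mul_le_two_mul_sub_sq_mul hτ0 (sq_nonneg _) (hdisc k hk) hinner hμlo.le
    (hμ k hk) hμhi.le
  linarith

/-- Summability estimate for the projected gradient method under the
convexity-type condition and approximate stationarity:
`∑_{k=0}^{N-1} ‖∇J(x_k)‖² ≤ ‖x_0 - x†‖² / (μ̲(2γ - μ̄ - 2/τ))`. -/
theorem projected_gradient_gradient_summability
    {X : Type*} [NormedAddCommGroup X] [InnerProductSpace ℝ X] [CompleteSpace X]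
    (M : Set X) (hMne : M.Nonempty) (hMcl : IsClosed M) (hMconv : Convex ℝ M)
    (J : X → ℝ) (hJ : Differentiable ℝ J)
    (xdag : X) (hxdag : xdag ∈ M)
    (γ η τ : ℝ) (hγ : 0 < γ) (hη : 0 ≤ η) (hτ : 1 / γ < τ)
    (hconvex : ∀ x ∈ M,
      ⟪gradient J x - gradient J xdag, x - xdag⟫ ≥ γ * ‖gradient J x‖ ^ 2)
    (hstat : ∀ x ∈ M, ⟪gradient J xdag, x - xdag⟫ ≥ -η)
    (N : ℕ) (x : ℕ → X) (hxM : ∀ k ≤ N, x k ∈ M)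
    (μ : ℕ → ℝ) (μlo μhi : ℝ) (hμlo : 0 < μlo)
    (hμ : ∀ k < N, μlo ≤ μ k ∧ μ k ≤ μhi) (hμhi : μhi < 2 * (γ - 1 / τ))
    (hproj : ∀ k < N, ∀ z ∈ M,
      ⟪(x k - μ k • gradient J (x k)) - x (k + 1), z - x (k + 1)⟫ ≤ 0)
    (hdisc : ∀ k < N, ‖gradient J (x k)‖ ^ 2 ≥ τ * η) :
    ∑ k ∈ Finset.range N, ‖gradient J (x k)‖ ^ 2 ≤
      ‖x 0 - xdag‖ ^ 2 / (μlo * (2 * γ - μhi - 2 / τ)) :=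
  projected_gradient_gradient_summability_general M J xdag hxdag γ η τ hγ hτ hconvex hstat N x hxM μ
    μlo μhi hμlo hμ hμhi hproj hdisc
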